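/- As operators on ℂ² ⊗ ℂ² ⊗ ℂ², the braid matrix on factors 2 and 3 commutes with the coproduct matrices of the fundamental representation: R̂₂₃ · (R₂₁ R₃₁) = (R₂₁ R₃₁) · R̂₂₃ and R̂₂₃ · ((R⁻¹)₁₂ (R⁻¹)₁₃) = ((R⁻¹)₁₂ (R⁻¹)₁₃) · R̂₂₃. -/
import Mathlib


noncomputable section

open Matrix Complex

/-- 4×4 complex matrix reindexed by pairs in `Fin 2 × Fin 2` (lexicographic order). -/
def pairMat (A : Matrix (Fin 4) (Fin 4) ℂ) :
    Matrix (Fin 2 × Fin 2) (Fin 2 × Fin 2) ℂ :=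
  Matrix.of fun p q =>
    A ⟨2 * p.1.val + p.2.val, by omega⟩ ⟨2 * q.1.val + q.2.val, by omega⟩

/-- The exotic R-matrix of the bialgebra S03, as an operator on ℂ² ⊗ ℂ². -/
def RS03 : Matrix (Fin 2 × Fin 2) (Fin 2 × Fin 2) ℂ :=
  (Real.sqrt 2 : ℂ)⁻¹ • pairMat !![1,0,0,1; 0,1,1,0; 0,1,-1,0; -1,0,0,1]

/-- The flip (permutation) operator on ℂ² ⊗ ℂ². -/
def Pflip : Matrix (Fin 2 × Fin 2) (Fin 2 × Fin 2) ℂ :=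
  pairMat !![1,0,0,0; 0,0,1,0; 0,1,0,0; 0,0,0,1]

/-- The braid matrix `R̂ = P · R`. -/
def RhatS03 : Matrix (Fin 2 × Fin 2) (Fin 2 × Fin 2) ℂ := Pflip * RS03

/-- `A₁₂` : the operator `A` acting on tensor factors 1 and 2 of ℂ² ⊗ ℂ² ⊗ ℂ². -/
def op12 (A : Matrix (Fin 2 × Fin 2) (Fin 2 × Fin 2) ℂ) :
    Matrix (Fin 2 × Fin 2 × Fin 2) (Fin 2 × Fin 2 × Fin 2) ℂ :=
  Matrix.of fun p q => if p.2.2 = q.2.2 then A (p.1, p.2.1) (q.1, q.2.1) else 0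

/-- `A₁₃` : the operator `A` acting on tensor factors 1 and 3 of ℂ² ⊗ ℂ² ⊗ ℂ². -/
def op13 (A : Matrix (Fin 2 × Fin 2) (Fin 2 × Fin 2) ℂ) :
    Matrix (Fin 2 × Fin 2 × Fin 2) (Fin 2 × Fin 2 × Fin 2) ℂ :=
  Matrix.of fun p q => if p.2.1 = q.2.1 then A (p.1, p.2.2) (q.1, q.2.2) else 0

/-- `A₂₃` : the operator `A` acting on tensor factors 2 and 3 of ℂ² ⊗ ℂ² ⊗ ℂ². -/
def op23 (A : Matrix (Fin 2 × Fin 2) (Fin 2 × Fin 2) ℂ) :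
    Matrix (Fin 2 × Fin 2 × Fin 2) (Fin 2 × Fin 2 × Fin 2) ℂ :=
  Matrix.of fun p q => if p.1 = q.1 then A (p.2.1, p.2.2) (q.2.1, q.2.2) else 0



namespace RhatAux

/-- Integer-entry analogues, for `decide`. -/
def pairMatZ (A : Matrix (Fin 4) (Fin 4) ℤ) :
    Matrix (Fin 2 × Fin 2) (Fin 2 × Fin 2) ℤ :=
  Matrix.of fun p q =>
    A ⟨2 * p.1.val + p.2.val, by omega⟩ ⟨2 * q.1.val + q.2.val, by omega⟩

def MZ : Matrix (Fin 2 × Fin 2) (Fin 2 × Fin 2) ℤ :=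
  pairMatZ !![1,0,0,1; 0,1,1,0; 0,1,-1,0; -1,0,0,1]
def MtZ : Matrix (Fin 2 × Fin 2) (Fin 2 × Fin 2) ℤ :=
  pairMatZ !![1,0,0,-1; 0,1,1,0; 0,1,-1,0; 1,0,0,1]
def PZ : Matrix (Fin 2 × Fin 2) (Fin 2 × Fin 2) ℤ :=
  pairMatZ !![1,0,0,0; 0,0,1,0; 0,1,0,0; 0,0,0,1]

def op12Z (A : Matrix (Fin 2 × Fin 2) (Fin 2 × Fin 2) ℤ) :
    Matrix (Fin 2 × Fin 2 × Fin 2) (Fin 2 × Fin 2 × Fin 2) ℤ :=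
  Matrix.of fun p q => if p.2.2 = q.2.2 then A (p.1, p.2.1) (q.1, q.2.1) else 0
def op13Z (A : Matrix (Fin 2 × Fin 2) (Fin 2 × Fin 2) ℤ) :
    Matrix (Fin 2 × Fin 2 × Fin 2) (Fin 2 × Fin 2 × Fin 2) ℤ :=
  Matrix.of fun p q => if p.2.1 = q.2.1 then A (p.1, p.2.2) (q.1, q.2.2) else 0
def op23Z (A : Matrix (Fin 2 × Fin 2) (Fin 2 × Fin 2) ℤ) :
    Matrix (Fin 2 × Fin 2 × Fin 2) (Fin 2 × Fin 2 × Fin 2) ℤ :=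
  Matrix.of fun p q => if p.1 = q.1 then A (p.2.1, p.2.2) (q.2.1, q.2.2) else 0

lemma keyZ1 :
    op23Z (PZ * MZ) * (op12Z (PZ * MZ * PZ) * op13Z (PZ * MZ * PZ)) =
      (op12Z (PZ * MZ * PZ) * op13Z (PZ * MZ * PZ)) * op23Z (PZ * MZ) := by decide

lemma keyZ2 :
    op23Z (PZ * MZ) * (op12Z MtZ * op13Z MtZ) =
      (op12Z MtZ * op13Z MtZ) * op23Z (PZ * MZ) := by decide

abbrev c : ℤ →+* ℂ := Int.castRingHom ℂ

lemma op12_map (A : Matrix (Fin 2 × Fin 2) (Fin 2 × Fin 2) ℤ) :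
    op12 (A.map c) = (op12Z A).map c := by
  ext p q
  by_cases h : p.2.2 = q.2.2 <;> simp [op12, op12Z, Matrix.map_apply, h]

lemma op13_map (A : Matrix (Fin 2 × Fin 2) (Fin 2 × Fin 2) ℤ) :
    op13 (A.map c) = (op13Z A).map c := by
  ext p q
  by_cases h : p.2.1 = q.2.1 <;> simp [op13, op13Z, Matrix.map_apply, h]

lemma op23_map (A : Matrix (Fin 2 × Fin 2) (Fin 2 × Fin 2) ℤ) :
    op23 (A.map c) = (op23Z A).map c := by
  ext p q
  by_cases h : p.1 = q.1 <;> simp [op23, op23Z, Matrix.map_apply, h]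

lemma op12_smul (s : ℂ) (A : Matrix (Fin 2 × Fin 2) (Fin 2 × Fin 2) ℂ) :
    op12 (s • A) = s • op12 A := by
  ext p q
  by_cases h : p.2.2 = q.2.2 <;> simp [op12, h]

lemma op13_smul (s : ℂ) (A : Matrix (Fin 2 × Fin 2) (Fin 2 × Fin 2) ℂ) :
    op13 (s • A) = s • op13 A := by
  ext p q
  by_cases h : p.2.1 = q.2.1 <;> simp [op13, h]

lemma op23_smul (s : ℂ) (A : Matrix (Fin 2 × Fin 2) (Fin 2 × Fin 2) ℂ) :
    op23 (s • A) = s • op23 A := by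
  ext p q
  by_cases h : p.1 = q.1 <;> simp [op23, h]

lemma hR : RS03 = (Real.sqrt 2 : ℂ)⁻¹ • (MZ.map c) := by
  ext ⟨a,b⟩ ⟨d,e⟩
  fin_cases a <;> fin_cases b <;> fin_cases d <;> fin_cases e <;>
    simp [RS03, MZ, pairMat, pairMatZ, Matrix.map_apply]

lemma hP : Pflip = PZ.map c := by
  ext ⟨a,b⟩ ⟨d,e⟩
  fin_cases a <;> fin_cases b <;> fin_cases d <;> fin_cases e <;>
    simp [Pflip, PZ, pairMat, pairMatZ, Matrix.map_apply, Matrix.vecHead, Matrix.vecTail]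

lemma hs2 : ((Real.sqrt 2:ℂ))⁻¹ * (Real.sqrt 2:ℂ)⁻¹ = 2⁻¹ := by
  rw [← mul_inv]
  norm_num [← Complex.ofReal_mul, Real.mul_self_sqrt]

lemma hRinv : RS03⁻¹ = (Real.sqrt 2 : ℂ)⁻¹ • (MtZ.map c) := by
  apply Matrix.inv_eq_right_inv
  ext ⟨a,b⟩ ⟨d,e⟩
  fin_cases a <;> fin_cases b <;> fin_cases d <;> fin_cases e <;>
    simp [RS03, MtZ, pairMat, pairMatZ, Matrix.map_apply, Matrix.mul_apply,
      Fintype.sum_prod_type, Fin.sum_univ_succ, Matrix.one_apply, Prod.ext_iff,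
      mul_mul_mul_comm, hs2] <;> ring

lemma hRhat : RhatS03 = (Real.sqrt 2 : ℂ)⁻¹ • ((PZ * MZ).map c) := by
  rw [RhatS03, hR, hP, mul_smul_comm, ← Matrix.map_mul]

lemma hPMP : Pflip * RS03 * Pflip = (Real.sqrt 2 : ℂ)⁻¹ • ((PZ * MZ * PZ).map c) := by
  rw [hR, hP, mul_smul_comm, smul_mul_assoc, ← Matrix.map_mul, ← Matrix.map_mul]

lemma smul3 (s : ℂ) (X Y Z : Matrix (Fin 2 × Fin 2 × Fin 2) (Fin 2 × Fin 2 × Fin 2) ℂ)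
    (h : X * (Y * Z) = (Y * Z) * X) :
    (s • X) * ((s • Y) * (s • Z)) = ((s • Y) * (s • Z)) * (s • X) := by
  simp only [smul_mul_assoc, mul_smul_comm, smul_smul, mul_assoc, h]

end RhatAux

open RhatAux in
/-- `A₂₁ = (P A P)₁₂` and `A₃₁ = (P A P)₁₃`: the braid matrix on factors 2, 3
commutes with the coproduct matrices `R₂₁ R₃₁` and `(R⁻¹)₁₂ (R⁻¹)₁₃` of
the fundamental representation. -/
theorem Rhat23_commutes_with_coproduct :
    op23 RhatS03 * (op12 (Pflip * RS03 * Pflip) * op13 (Pflip * RS03 * Pflip)) =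
      (op12 (Pflip * RS03 * Pflip) * op13 (Pflip * RS03 * Pflip)) * op23 RhatS03 ∧
    op23 RhatS03 * (op12 RS03⁻¹ * op13 RS03⁻¹) =
      (op12 RS03⁻¹ * op13 RS03⁻¹) * op23 RhatS03 := by
  constructor
  · rw [hRhat, hPMP, op23_smul, op12_smul, op13_smul, op23_map, op12_map, op13_map]
    refine smul3 _ _ _ _ ?_
    rw [← Matrix.map_mul, ← Matrix.map_mul, ← Matrix.map_mul, keyZ1]
  · rw [hRhat, hRinv, op23_smul, op12_smul, op13_smul, op23_map, op12_map, op13_map]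
    refine smul3 _ _ _ _ ?_
    rw [← Matrix.map_mul, ← Matrix.map_mul, ← Matrix.map_mul, keyZ2]
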